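/- Let T : [−1, 1] → [−1, 1] be the Hemmer map T(x) = 1 − 2√|x|, and let ν be the Borel measure on [−1, 1] with density ρ(x) = (1 − x)/2 with respect to Lebesgue measure. Then T indeed maps [−1, 1] into [−1, 1], ν is a probability measure (ν([−1,1]) = 1), and ν is T-invariant: ν(T^{−1} A) = ν(A) for every Borel set A ⊆ [−1, 1]. -/

import Mathlib

open MeasureTheory Set

noncomputable section

/-- The Hemmer map `T(x) = 1 − 2√|x|` on the interval `[-1, 1]`. -/
def hemmer (x : ℝ) : ℝ := 1 - 2 * Real.sqrt |x|

/-- The measure on `[-1, 1]` with density `ρ(x) = (1 − x)/2` w.r.t. Lebesgue measure. -/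
def hemmerMeasure : Measure ℝ :=
  (volume.restrict (Set.Icc (-1 : ℝ) 1)).withDensity fun x => ENNReal.ofReal ((1 - x) / 2)

/-!
Both `ν` and its push-forward `T_* ν` are probability measures concentrated on `[-1, 1]` (the
latter because `T` maps `[-1, 1]` into itself), so they agree once their distribution functions
agree on `[-1, 1)`. Write `a = 1 - 2r` with `0 < r ≤ 1`; then `T⁻¹ (-∞, a] = {x | r² ≤ |x|}`.
With `F(t) = ν [-1, t] = (t + 1)(3 - t)/4` this set has measure `F(-r²) + 1 - F(r²) = 1 - r²`,
which is `F(1 - 2r)`.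
-/

theorem MeasureTheory.Measure.ext_of_Iic_of_compl_Icc_null {μ ν : Measure ℝ}
    [IsProbabilityMeasure μ] [IsProbabilityMeasure ν] {a b : ℝ}
    (hμ : μ (Icc a b)ᶜ = 0) (hν : ν (Icc a b)ᶜ = 0)
    (h : ∀ x ∈ Ico a b, μ (Iic x) = ν (Iic x)) : μ = ν := by
  have null_of_lt {ρ : Measure ℝ} (hρ : ρ (Icc a b)ᶜ = 0) {x : ℝ} (hx : x < a) :
      ρ (Iic x) = 0 :=
    measure_mono_null (fun y (hy : y ≤ x) (hy' : y ∈ Icc a b) => (hy.trans_lt hx).not_ge hy'.1)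
      hρ
  have eq_one_of_le {ρ : Measure ℝ} [IsProbabilityMeasure ρ] (hρ : ρ (Icc a b)ᶜ = 0) {x : ℝ}
      (hx : b ≤ x) : ρ (Iic x) = 1 :=
    le_antisymm prob_le_one <| (prob_compl_eq_zero_iff measurableSet_Icc).mp hρ ▸
      measure_mono fun y hy => hy.2.trans hx
  refine Measure.ext_of_Iic μ ν fun x => ?_
  rcases lt_or_ge x a with hxa | hax
  · rw [null_of_lt hμ hxa, null_of_lt hν hxa]
  rcases lt_or_ge x b with hxb | hbx
  · exact h x ⟨hax, hxb⟩
  · rw [eq_one_of_le hμ hbx, eq_one_of_le hν hbx]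

theorem intervalIntegral_one_sub_div_two (a b : ℝ) :
    ∫ x in a..b, (1 - x) / 2 = (b - a) * (2 - a - b) / 4 := by
  rw [intervalIntegral.integral_div, intervalIntegral.integral_sub intervalIntegrable_const
    intervalIntegral.intervalIntegrable_id, integral_id, intervalIntegral.integral_const]
  simp only [smul_eq_mul]
  ring

theorem lintegral_Icc_one_sub_div_two {a b : ℝ} (hab : a ≤ b) (hb : b ≤ 1) :
    ∫⁻ x in Icc a b, ENNReal.ofReal ((1 - x) / 2) =
      ENNReal.ofReal ((b - a) * (2 - a - b) / 4) := by
  have hnonneg : 0 ≤ᵐ[volume.restrict (Icc a b)] fun x => (1 - x) / 2 := by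
    filter_upwards [self_mem_ae_restrict measurableSet_Icc] with x hx
    simp only [Pi.zero_apply]
    linarith [hx.2]
  have hcont : Continuous fun x : ℝ => (1 - x) / 2 := by fun_prop
  rw [← ofReal_integral_eq_lintegral_ofReal hcont.integrableOn_Icc hnonneg,
    integral_Icc_eq_integral_Ioc, ← intervalIntegral.integral_of_le hab,
    intervalIntegral_one_sub_div_two]

theorem hemmerMeasure_eq_restrict :
    hemmerMeasure =
      (volume.withDensity fun x => ENNReal.ofReal ((1 - x) / 2)).restrict (Icc (-1) 1) :=
  (restrict_withDensity measurableSet_Icc _).symm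

theorem hemmerMeasure_compl_Icc : hemmerMeasure (Icc (-1) 1)ᶜ = 0 := by
  rw [hemmerMeasure_eq_restrict, Measure.restrict_apply' measurableSet_Icc, compl_inter_self,
    measure_empty]

theorem hemmerMeasure_Icc {a b : ℝ} (ha : -1 ≤ a) (hab : a ≤ b) (hb : b ≤ 1) :
    hemmerMeasure (Icc a b) = ENNReal.ofReal ((b - a) * (2 - a - b) / 4) := by
  rw [hemmerMeasure_eq_restrict, Measure.restrict_apply' measurableSet_Icc,
    inter_eq_left.mpr (Icc_subset_Icc ha hb), withDensity_apply _ measurableSet_Icc,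
    lintegral_Icc_one_sub_div_two hab hb]

theorem hemmerMeasure_Icc_neg_one_one : hemmerMeasure (Icc (-1) 1) = 1 := by
  rw [hemmerMeasure_Icc le_rfl (by norm_num) le_rfl]
  norm_num

instance : IsProbabilityMeasure hemmerMeasure :=
  ⟨by rw [← measure_add_measure_compl (measurableSet_Icc (a := -1) (b := 1)),
    hemmerMeasure_Icc_neg_one_one, hemmerMeasure_compl_Icc, add_zero]⟩

theorem hemmerMeasure_inter_Icc (s : Set ℝ) :
    hemmerMeasure (s ∩ Icc (-1) 1) = hemmerMeasure s := by
  rw [hemmerMeasure_eq_restrict, Measure.restrict_apply' measurableSet_Icc,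
    Measure.restrict_apply' measurableSet_Icc, inter_assoc, inter_self]

theorem hemmerMeasure_Iic {a : ℝ} (ha : -1 ≤ a) (ha' : a ≤ 1) :
    hemmerMeasure (Iic a) = ENNReal.ofReal ((a + 1) * (3 - a) / 4) := by
  have hset : Iic a ∩ Icc (-1) 1 = Icc (-1) a := by
    ext x
    simp only [mem_inter_iff, mem_Iic, mem_Icc]
    grind
  rw [← hemmerMeasure_inter_Icc, hset, hemmerMeasure_Icc le_rfl ha ha']
  congr 1
  ring

theorem hemmerMeasure_Ici {a : ℝ} (ha : -1 ≤ a) (ha' : a ≤ 1) :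
    hemmerMeasure (Ici a) = ENNReal.ofReal ((1 - a) ^ 2 / 4) := by
  have hset : Ici a ∩ Icc (-1) 1 = Icc a 1 := by
    ext x
    simp only [mem_inter_iff, mem_Ici, mem_Icc]
    grind
  rw [← hemmerMeasure_inter_Icc, hset, hemmerMeasure_Icc ha ha' le_rfl]
  congr 1
  ring

theorem continuous_hemmer : Continuous hemmer := by
  unfold hemmer
  fun_prop

theorem hemmer_mapsTo_Icc : MapsTo hemmer (Icc (-1) 1) (Icc (-1) 1) := by
  intro x hx
  have hsqrt : Real.sqrt |x| ≤ 1 := Real.sqrt_le_one.mpr (abs_le.mpr hx)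
  have hsqrt₀ := Real.sqrt_nonneg |x|
  constructor <;> simp only [hemmer] <;> linarith

theorem hemmer_preimage_Iic {r : ℝ} (hr : 0 ≤ r) :
    hemmer ⁻¹' Iic (1 - 2 * r) = Iic (-r ^ 2) ∪ Ici (r ^ 2) := by
  ext x
  have : hemmer x ≤ 1 - 2 * r ↔ r ≤ Real.sqrt |x| := by
    unfold hemmer
    constructor <;> intro <;> linarith
  rw [mem_preimage, mem_Iic, this, Real.le_sqrt hr (abs_nonneg x), le_abs']
  rfl

theorem map_hemmer_hemmerMeasure : hemmerMeasure.map hemmer = hemmerMeasure := by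
  have := Measure.isProbabilityMeasure_map (μ := hemmerMeasure) continuous_hemmer.aemeasurable
  refine Measure.ext_of_Iic_of_compl_Icc_null ?_ hemmerMeasure_compl_Icc fun a ha => ?_
  · rw [Measure.map_apply continuous_hemmer.measurable measurableSet_Icc.compl, preimage_compl]
    exact measure_mono_null (compl_subset_compl.mpr hemmer_mapsTo_Icc) hemmerMeasure_compl_Icc
  obtain ⟨r, rfl⟩ : ∃ r, a = 1 - 2 * r := ⟨(1 - a) / 2, by ring⟩
  obtain ⟨hr₀, hr₁⟩ : 0 < r ∧ r ≤ 1 := ⟨by linarith [ha.2], by linarith [ha.1]⟩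
  have hr₂ : r ^ 2 ≤ 1 := pow_le_one₀ hr₀.le hr₁
  have hdisj : Disjoint (Iic (-r ^ 2)) (Ici (r ^ 2)) :=
    Iic_disjoint_Ici.mpr (by nlinarith)
  rw [Measure.map_apply continuous_hemmer.measurable measurableSet_Iic, hemmer_preimage_Iic hr₀.le,
    measure_union hdisj measurableSet_Ici, hemmerMeasure_Iic (by linarith) (by nlinarith),
    hemmerMeasure_Ici (by nlinarith) hr₂, hemmerMeasure_Iic ha.1 ha.2.le,
    ← ENNReal.ofReal_add (by nlinarith) (by positivity)]
  congr 1
  ring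

/-- The Hemmer map `T(x) = 1 − 2√|x|` maps `[-1,1]` into itself, the
measure `ν` with density `(1 − x)/2` is a probability measure on `[-1,1]`, and `ν` is
`T`-invariant: `ν(T⁻¹A) = ν(A)` for every Borel `A ⊆ [-1,1]`. -/
theorem statement_12 :
    Set.MapsTo hemmer (Set.Icc (-1 : ℝ) 1) (Set.Icc (-1 : ℝ) 1) ∧
    hemmerMeasure (Set.Icc (-1 : ℝ) 1) = 1 ∧
    ∀ A : Set ℝ, A ⊆ Set.Icc (-1 : ℝ) 1 → MeasurableSet A →
      hemmerMeasure (hemmer ⁻¹' A) = hemmerMeasure A := by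
  refine ⟨hemmer_mapsTo_Icc, hemmerMeasure_Icc_neg_one_one, fun A _ hA => ?_⟩
  rw [← Measure.map_apply continuous_hemmer.measurable hA, map_hemmer_hemmerMeasure]
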